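/- arXiv:1311.3726 — 2 statements merged into one kernel-verified Lean document; each statement's English description precedes it below -/
import Mathlib

section
/- Set g₀ := −f and assume (†): for each i = 1,…,n exactly one of the coefficients (g₀)_{d,i}, (g₁)_{d,i}, …, (g_m)_{d,i} is strictly negative. Let A := I, the identity matrix of size m+1 (so h_k = g_k for k = 0,…,m). Then f^I_{gp,g} ≤ s₀(f,g) := sup{G(λ)_gp : λ ∈ (0,∞)^m} (as elements of ℝ ∪ {±∞}). -/
open MvPolynomial Finset

noncomputable section

/-- `Finset.filter` with classical decidability. -/
def pfilter {β : Type*} (s : Finset β) (q : β → Prop) : Finset β :=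
  @Finset.filter β q (fun _ => Classical.propDecidable _) s

/-- `|α| := α₁ + ⋯ + αₙ` for a multi-index `α`. -/
def adeg {n : ℕ} (α : Fin n →₀ ℕ) : ℕ := ∑ i, α i

/-- `Ω(p) := {α : |α| ≤ d, p_α ≠ 0, α ∉ {0, ε₁, …, εₙ}}`. -/
def OmegaSet {n : ℕ} (d : ℕ) (p : MvPolynomial (Fin n) ℝ) : Finset (Fin n →₀ ℕ) :=
  pfilter p.support (fun α => adeg α ≤ d ∧ α ≠ 0 ∧ ∀ i, α ≠ Finsupp.single i d)

/-- `Δ(p) := {α ∈ Ω(p) : p_α x^α is not a square}`. -/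
def DelSet {n : ℕ} (d : ℕ) (p : MvPolynomial (Fin n) ℝ) : Finset (Fin n →₀ ℕ) :=
  pfilter (OmegaSet d p)
    (fun α => ¬ IsSquare ((monomial α (p.coeff α)) : MvPolynomial (Fin n) ℝ))

/-- Feasibility for program (lw) for `p`. -/
def LwFeas {n : ℕ} (d : ℕ) (p : MvPolynomial (Fin n) ℝ)
    (z : (Fin n →₀ ℕ) → Fin n → ℝ) : Prop :=
  (∀ α ∈ DelSet d p, ∀ i, 0 ≤ z α i ∧ (z α i = 0 ↔ α i = 0)) ∧
  (∀ i, ∑ α ∈ DelSet d p, z α i ≤ p.coeff (Finsupp.single i d)) ∧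
  (∀ α ∈ DelSet d p, adeg α = d →
    ∏ i, (z α i / (α i : ℝ)) ^ (α i) = (p.coeff α / (d : ℝ)) ^ d)

/-- The objective function `v` of program (lw). -/
def lwObj {n : ℕ} (d : ℕ) (p : MvPolynomial (Fin n) ℝ)
    (z : (Fin n →₀ ℕ) → Fin n → ℝ) : ℝ :=
  ∑ α ∈ pfilter (DelSet d p) (fun α => adeg α < d),
    ((d : ℝ) - (adeg α : ℝ)) *
      (((p.coeff α / (d : ℝ)) ^ d * ∏ i, ((α i : ℝ) / z α i) ^ (α i)) ^
        ((1 : ℝ) / ((d : ℝ) - (adeg α : ℝ))))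

/-- `ρ(p) ∈ [0,∞]`, the infimum of `v` over the feasible set (`⊤` if infeasible). -/
def lwRho {n : ℕ} (d : ℕ) (p : MvPolynomial (Fin n) ℝ) : EReal :=
  sInf ((fun z => ((lwObj d p z : ℝ) : EReal)) '' {z | LwFeas d p z})

/-- `p_gp := p(0) − ρ(p) ∈ ℝ ∪ {−∞}`. -/
def lwGp {n : ℕ} (d : ℕ) (p : MvPolynomial (Fin n) ℝ) : EReal :=
  ((eval (0 : Fin n → ℝ) p : ℝ) : EReal) - lwRho d p

/-- `G(λ) := f − ∑ⱼ λⱼ gⱼ`. -/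
def polyG {n m : ℕ} (f : MvPolynomial (Fin n) ℝ) (g : Fin m → MvPolynomial (Fin n) ℝ)
    (lam : Fin m → ℝ) : MvPolynomial (Fin n) ℝ :=
  f - ∑ j, C (lam j) * g j

/-- `s(f,g) := sup{G(λ)_gp : λ ∈ [0,∞)^m}`. -/
def sBound {n m : ℕ} (d : ℕ) (f : MvPolynomial (Fin n) ℝ)
    (g : Fin m → MvPolynomial (Fin n) ℝ) : EReal :=
  sSup ((fun lam => lwGp d (polyG f g lam)) '' {lam : Fin m → ℝ | ∀ j, 0 ≤ lam j})


/-- `h_k := ∑_{j=0}^m a_{jk} g_j` for `gext = (g₀, g₁, …, g_m)` with `g₀ = −f`. -/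
def hpoly {n m : ℕ} (gext : Fin (m+1) → MvPolynomial (Fin n) ℝ)
    (A : Fin (m+1) → Fin (m+1) → ℝ) (k : Fin (m+1)) : MvPolynomial (Fin n) ℝ :=
  ∑ j, C (A j k) * gext j

/-- `μ` extended by `μ₀ := 1`. -/
def muExt {m : ℕ} (mu : Fin m → ℝ) : Fin (m+1) → ℝ := Fin.cons 1 mu

/-- `H(μ) := −∑_{k=0}^m μ_k h_k`. -/
def Hpoly {n m : ℕ} (gext : Fin (m+1) → MvPolynomial (Fin n) ℝ)
    (A : Fin (m+1) → Fin (m+1) → ℝ) (mu : Fin m → ℝ) : MvPolynomial (Fin n) ℝ :=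
  - ∑ k, C (muExt mu k) * hpoly gext A k

/-- `H(μ)_α^+ := −∑_{j : (h_j)_α < 0} (h_j)_α μ_j`. -/
def Hplus {n m : ℕ} (gext : Fin (m+1) → MvPolynomial (Fin n) ℝ)
    (A : Fin (m+1) → Fin (m+1) → ℝ) (mu : Fin m → ℝ) (α : Fin n →₀ ℕ) : ℝ :=
  ∑ j, if (hpoly gext A j).coeff α < 0 then -((hpoly gext A j).coeff α * muExt mu j) else 0

/-- `H(μ)_α^− := ∑_{j : (h_j)_α > 0} (h_j)_α μ_j`. -/
def Hminus {n m : ℕ} (gext : Fin (m+1) → MvPolynomial (Fin n) ℝ)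
    (A : Fin (m+1) → Fin (m+1) → ℝ) (mu : Fin m → ℝ) (α : Fin n →₀ ℕ) : ℝ :=
  ∑ j, if 0 < (hpoly gext A j).coeff α then (hpoly gext A j).coeff α * muExt mu j else 0

/-- `Δ := Δ(f) ∪ Δ(−g₁) ∪ ⋯ ∪ Δ(−g_m)` (note `−g₀ = f`). -/
def DelTot2 {n m : ℕ} (d : ℕ) (gext : Fin (m+1) → MvPolynomial (Fin n) ℝ) :
    Finset (Fin n →₀ ℕ) :=
  Finset.univ.biUnion (fun j : Fin (m+1) => DelSet d (-(gext j)))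

/-- Feasibility for program (lw2). -/
def Lw2Feas {n m : ℕ} (d : ℕ) (gext : Fin (m+1) → MvPolynomial (Fin n) ℝ)
    (A : Fin (m+1) → Fin (m+1) → ℝ)
    (z : (Fin n →₀ ℕ) → Fin n → ℝ) (w : (Fin n →₀ ℕ) → ℝ) (mu : Fin m → ℝ) : Prop :=
  (∀ j, 0 < mu j) ∧
  (∀ α ∈ DelTot2 d gext, ∀ i, 0 ≤ z α i ∧ (z α i = 0 ↔ α i = 0)) ∧
  (∀ α ∈ DelTot2 d gext, 0 < w α) ∧
  (∀ i, ∑ α ∈ DelTot2 d gext, z α i ≤ (Hpoly gext A mu).coeff (Finsupp.single i d)) ∧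
  (∀ α ∈ DelTot2 d gext, adeg α = d →
    (w α / (d : ℝ)) ^ d ≤ ∏ i, (z α i / (α i : ℝ)) ^ (α i)) ∧
  (∀ α ∈ DelTot2 d gext, max (Hplus gext A mu α) (Hminus gext A mu α) ≤ w α) ∧
  (∀ j : Fin (m+1), j ≠ 0 → 0 ≤ ∑ k, A j k * muExt mu k)

/-- The objective function `t` of program (lw2). -/
def lw2Obj {n m : ℕ} (d : ℕ) (gext : Fin (m+1) → MvPolynomial (Fin n) ℝ)
    (A : Fin (m+1) → Fin (m+1) → ℝ)
    (z : (Fin n →₀ ℕ) → Fin n → ℝ) (w : (Fin n →₀ ℕ) → ℝ) (mu : Fin m → ℝ) : ℝ :=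
  (∑ j : Fin m, mu j * max (eval (0 : Fin n → ℝ) (hpoly gext A j.succ)) 0) +
  ∑ α ∈ pfilter (DelTot2 d gext) (fun α => adeg α < d),
    ((d : ℝ) - (adeg α : ℝ)) *
      (((w α / (d : ℝ)) ^ d * ∏ i, ((α i : ℝ) / z α i) ^ (α i)) ^
        ((1 : ℝ) / ((d : ℝ) - (adeg α : ℝ))))

/-- `ρ_A ∈ [0,∞]`, the optimal value of program (lw2) (`⊤` if infeasible). -/
def rhoA {n m : ℕ} (d : ℕ) (gext : Fin (m+1) → MvPolynomial (Fin n) ℝ)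
    (A : Fin (m+1) → Fin (m+1) → ℝ) : EReal :=
  sInf ((fun t : ((Fin n →₀ ℕ) → Fin n → ℝ) × ((Fin n →₀ ℕ) → ℝ) × (Fin m → ℝ) =>
      ((lw2Obj d gext A t.1 t.2.1 t.2.2 : ℝ) : EReal)) ''
    {t | Lw2Feas d gext A t.1 t.2.1 t.2.2})

/-- `f^A_{gp,g} := −h₀(0) − ρ_A ∈ ℝ ∪ {−∞}`. -/
def fAgp {n m : ℕ} (d : ℕ) (gext : Fin (m+1) → MvPolynomial (Fin n) ℝ)
    (A : Fin (m+1) → Fin (m+1) → ℝ) : EReal :=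
  ((-(eval (0 : Fin n → ℝ) (hpoly gext A 0)) : ℝ) : EReal) - rhoA d gext A

/-! The argument works for every coefficient matrix `A`. Let `(z, w, μ)` be feasible for (lw2).
The support of `H(μ)` lies in that of the `g_j`, so `Δ(H(μ)) ⊆ Δ`, and
`|H(μ)_α| = |H(μ)_α^+ − H(μ)_α^-| ≤ max (H(μ)_α^+, H(μ)_α^-) ≤ w_α`. Hence shrinking each
column `z_α` with `|α| = d` until its product constraint becomes an equality yields a feasible
point of (lw) for `H(μ)`: the row sums only decrease, and the objective terms (`|α| < d`) are
unchanged in `z` and only grow when `|H(μ)_α|` is replaced by `w_α`. Together with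
`h_j(0) ≤ h_j(0)^+` this gives `−h₀(0) − t(z, w, μ) ≤ H(μ)_gp`, and for `A = I` the polynomial
`H(μ)` is `G(μ)`. -/

lemma mem_pfilter {β : Type*} {s : Finset β} {q : β → Prop} {a : β} :
    a ∈ pfilter s q ↔ a ∈ s ∧ q a := by
  classical
  simp [pfilter, Finset.mem_filter]

lemma mem_OmegaSet {n d : ℕ} {p : MvPolynomial (Fin n) ℝ} {α : Fin n →₀ ℕ} :
    α ∈ OmegaSet d p ↔
      p.coeff α ≠ 0 ∧ adeg α ≤ d ∧ α ≠ 0 ∧ ∀ i, α ≠ Finsupp.single i d := by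
  rw [OmegaSet, mem_pfilter, mem_support_iff]

lemma coeff_ne_zero_of_mem_DelSet {n d : ℕ} {p : MvPolynomial (Fin n) ℝ} {α : Fin n →₀ ℕ}
    (hα : α ∈ DelSet d p) : p.coeff α ≠ 0 :=
  (mem_OmegaSet.1 (mem_pfilter.1 hα).1).1

lemma Even.div_pow_le_div_pow {d : ℕ} (hde : Even d) {a b c : ℝ} (hc : 0 ≤ c)
    (h : |a| ≤ b) : (a / c) ^ d ≤ (b / c) ^ d := by
  rw [← hde.pow_abs, abs_div, abs_of_nonneg hc]
  exact pow_le_pow_left₀ (by positivity) (div_le_div_of_nonneg_right h hc) d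

section Lw

variable {n d : ℕ}

/-- The summand of the objectives `v` and `t` for `α`, with coefficient `c` and column `x`. -/
def gpTerm (d : ℕ) (α : Fin n →₀ ℕ) (c : ℝ) (x : Fin n → ℝ) : ℝ :=
  ((d : ℝ) - adeg α) *
    (((c / d) ^ d * ∏ i, ((α i : ℝ) / x i) ^ (α i)) ^ ((1 : ℝ) / ((d : ℝ) - adeg α)))

lemma lwObj_eq_sum_gpTerm (p : MvPolynomial (Fin n) ℝ)
    (z : (Fin n →₀ ℕ) → Fin n → ℝ) :
    lwObj d p z =
      ∑ α ∈ pfilter (DelSet d p) (fun α => adeg α < d), gpTerm d α (p.coeff α) (z α) :=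
  rfl

lemma prod_nat_div_pow_nonneg (α : Fin n →₀ ℕ) {x : Fin n → ℝ} (hx : ∀ i, 0 ≤ x i) :
    0 ≤ ∏ i, ((α i : ℝ) / x i) ^ (α i) :=
  prod_nonneg fun i _ => pow_nonneg (div_nonneg (Nat.cast_nonneg _) (hx i)) _

lemma gpTerm_nonneg (hde : Even d) {α : Fin n →₀ ℕ} (hα : adeg α < d) (c : ℝ)
    {x : Fin n → ℝ} (hx : ∀ i, 0 ≤ x i) : 0 ≤ gpTerm d α c x := by
  have hα' : (adeg α : ℝ) < d := by exact_mod_cast hα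
  exact mul_nonneg (sub_nonneg.2 hα'.le) (Real.rpow_nonneg
    (mul_nonneg (hde.pow_nonneg _) (prod_nat_div_pow_nonneg α hx)) _)

lemma gpTerm_le_gpTerm (hde : Even d) {α : Fin n →₀ ℕ} (hα : adeg α < d) {a b : ℝ}
    (hab : |a| ≤ b) {x : Fin n → ℝ} (hx : ∀ i, 0 ≤ x i) :
    gpTerm d α a x ≤ gpTerm d α b x := by
  have hα' : (adeg α : ℝ) < d := by exact_mod_cast hα
  refine mul_le_mul_of_nonneg_left (Real.rpow_le_rpow ?_ ?_ ?_) (sub_nonneg.2 hα'.le)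
  · exact mul_nonneg (hde.pow_nonneg _) (prod_nat_div_pow_nonneg α hx)
  · exact mul_le_mul_of_nonneg_right (hde.div_pow_le_div_pow (Nat.cast_nonneg d) hab)
      (prod_nat_div_pow_nonneg α hx)
  · exact div_nonneg zero_le_one (sub_nonneg.2 hα'.le)

lemma prod_div_pow_pos {x : Fin n → ℝ} {α : Fin n →₀ ℕ}
    (hx : ∀ i, 0 ≤ x i ∧ (x i = 0 ↔ α i = 0)) : 0 < ∏ i, (x i / α i) ^ (α i) := by
  refine prod_pos fun i _ => ?_
  rcases Nat.eq_zero_or_pos (α i) with h | h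
  · simp [h]
  · have : 0 < x i := (hx i).1.lt_of_ne fun h0 => h.ne' ((hx i).2.1 h0.symm)
    positivity

lemma prod_mul_div_pow (c : ℝ) (x : Fin n → ℝ) (α : Fin n →₀ ℕ) :
    ∏ i, (c * x i / α i) ^ (α i) = c ^ adeg α * ∏ i, (x i / α i) ^ (α i) := by
  simp_rw [mul_div_assoc, mul_pow, prod_mul_distrib, prod_pow_eq_pow_sum, adeg]

/-- Shrinks the columns of `z` of degree `d` so that the product constraints of (lw) become
equalities. -/
def lwRescale (d : ℕ) (p : MvPolynomial (Fin n) ℝ) (z : (Fin n →₀ ℕ) → Fin n → ℝ) :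
    (Fin n →₀ ℕ) → Fin n → ℝ := fun α i =>
  if adeg α = d then
    ((p.coeff α / d) ^ d / ∏ j, (z α j / α j) ^ (α j)) ^ ((d : ℝ)⁻¹) * z α i
  else z α i

variable {p : MvPolynomial (Fin n) ℝ} {S : Finset (Fin n →₀ ℕ)}
  {z : (Fin n →₀ ℕ) → Fin n → ℝ} {w : (Fin n →₀ ℕ) → ℝ}

lemma lwFeas_lwRescale (hd : d ≠ 0) (hde : Even d) (hS : DelSet d p ⊆ S)
    (hz : ∀ α ∈ S, ∀ i, 0 ≤ z α i ∧ (z α i = 0 ↔ α i = 0))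
    (hsum : ∀ i, ∑ α ∈ S, z α i ≤ p.coeff (Finsupp.single i d))
    (hprod : ∀ α ∈ S, adeg α = d → (w α / d) ^ d ≤ ∏ i, (z α i / α i) ^ (α i))
    (hw : ∀ α ∈ S, |p.coeff α| ≤ w α) :
    LwFeas d p (lwRescale d p z) := by
  have hd0 : (0 : ℝ) < d := by positivity
  have hscale : ∀ α ∈ DelSet d p, adeg α = d → ∃ c : ℝ, 0 < c ∧ c ≤ 1 ∧
      (∀ i, lwRescale d p z α i = c * z α i) ∧
      c ^ d * ∏ i, (z α i / α i) ^ (α i) = (p.coeff α / d) ^ d := by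
    intro α hα hdeg
    have hP := prod_div_pow_pos (hz α (hS hα))
    have hX : 0 < (p.coeff α / d) ^ d :=
      hde.pow_pos (div_ne_zero (coeff_ne_zero_of_mem_DelSet hα) hd0.ne')
    refine ⟨_, by positivity, ?_, fun i => if_pos hdeg, ?_⟩
    · refine Real.rpow_le_one (by positivity) ((div_le_one hP).2 ?_) (by positivity)
      exact (hde.div_pow_le_div_pow hd0.le (hw α (hS hα))).trans (hprod α (hS hα) hdeg)
    · rw [Real.rpow_inv_natCast_pow (by positivity) hd, div_mul_cancel₀ _ hP.ne']
  refine ⟨fun α hα i => ?_, fun i => ?_, fun α hα hdeg => ?_⟩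
  · by_cases hdeg : adeg α = d
    · obtain ⟨c, hc0, -, hrescale, -⟩ := hscale α hα hdeg
      rw [hrescale, mul_eq_zero, or_iff_right hc0.ne']
      exact ⟨mul_nonneg hc0.le (hz α (hS hα) i).1, (hz α (hS hα) i).2⟩
    · simpa [lwRescale, hdeg] using hz α (hS hα) i
  · refine (sum_le_sum fun α hα => ?_).trans
      ((sum_le_sum_of_subset_of_nonneg hS fun α hα _ => (hz α hα i).1).trans (hsum i))
    by_cases hdeg : adeg α = d
    · obtain ⟨c, -, hc1, hrescale, -⟩ := hscale α hα hdeg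
      rw [hrescale]
      exact mul_le_of_le_one_left (hz α (hS hα) i).1 hc1
    · simp [lwRescale, hdeg]
  · obtain ⟨c, -, -, hrescale, hc⟩ := hscale α hα hdeg
    simp_rw [hrescale, prod_mul_div_pow, hdeg, hc]

lemma lwObj_lwRescale_le (hde : Even d) (hS : DelSet d p ⊆ S) (hz : ∀ α ∈ S, ∀ i, 0 ≤ z α i)
    (hw : ∀ α ∈ S, |p.coeff α| ≤ w α) :
    lwObj d p (lwRescale d p z) ≤
      ∑ α ∈ pfilter S (fun α => adeg α < d), gpTerm d α (w α) (z α) := by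
  have hsub : pfilter (DelSet d p) (fun α => adeg α < d) ⊆ pfilter S (fun α => adeg α < d) :=
    fun α hα => mem_pfilter.2 ⟨hS (mem_pfilter.1 hα).1, (mem_pfilter.1 hα).2⟩
  rw [lwObj_eq_sum_gpTerm]
  refine (sum_le_sum fun α hα => ?_).trans
    (sum_le_sum_of_subset_of_nonneg hsub fun α hα _ => ?_)
  · obtain ⟨hαD, hlt⟩ := mem_pfilter.1 hα
    have hfix : lwRescale d p z α = z α := funext fun i => if_neg hlt.ne
    rw [hfix]
    exact gpTerm_le_gpTerm hde hlt (hw α (hS hαD)) (hz α (hS hαD))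
  · obtain ⟨hαS, hlt⟩ := mem_pfilter.1 hα
    exact gpTerm_nonneg hde hlt _ (hz α hαS)

lemma lwRho_le_sum_gpTerm (hd : d ≠ 0) (hde : Even d) (hS : DelSet d p ⊆ S)
    (hz : ∀ α ∈ S, ∀ i, 0 ≤ z α i ∧ (z α i = 0 ↔ α i = 0))
    (hsum : ∀ i, ∑ α ∈ S, z α i ≤ p.coeff (Finsupp.single i d))
    (hprod : ∀ α ∈ S, adeg α = d → (w α / d) ^ d ≤ ∏ i, (z α i / α i) ^ (α i))
    (hw : ∀ α ∈ S, |p.coeff α| ≤ w α) :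
    lwRho d p ≤
      ((∑ α ∈ pfilter S (fun α => adeg α < d), gpTerm d α (w α) (z α) : ℝ) : EReal) :=
  le_trans (sInf_le ⟨_, lwFeas_lwRescale hd hde hS hz hsum hprod hw, rfl⟩ : lwRho d p ≤ _)
    (EReal.coe_le_coe_iff.2 (lwObj_lwRescale_le hde hS (fun α hα i => (hz α hα i).1) hw))

end Lw

lemma EReal.coe_sub_sInf_image_le {ι : Type*} {c : ℝ} {u : ι → ℝ} {s : Set ι} {b : EReal}
    (h : ∀ i ∈ s, ((c - u i : ℝ) : EReal) ≤ b) :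
    (c : EReal) - sInf ((fun i => (u i : EReal)) '' s) ≤ b := by
  induction b using EReal.rec with
  | bot =>
    have hs : s = ∅ := Set.eq_empty_of_forall_notMem fun i hi =>
      EReal.coe_ne_bot _ (le_bot_iff.1 (h i hi))
    simp [hs, EReal.sub_top]
  | top => exact le_top
  | coe b =>
    have hlow : ((c - b : ℝ) : EReal) ≤ sInf ((fun i => (u i : EReal)) '' s) := by
      refine le_sInf ?_
      rintro _ ⟨i, hi, rfl⟩
      have := EReal.coe_le_coe_iff.1 (h i hi)
      exact EReal.coe_le_coe_iff.2 (by linarith)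
    calc (c : EReal) - sInf ((fun i => (u i : EReal)) '' s)
        ≤ (c : EReal) - ((c - b : ℝ) : EReal) :=
          EReal.sub_le_sub le_rfl hlow
      _ = b := by rw [← EReal.coe_sub, sub_sub_cancel]

section Lw2

variable {n m d : ℕ} (gext : Fin (m+1) → MvPolynomial (Fin n) ℝ)
  (A : Fin (m+1) → Fin (m+1) → ℝ) {mu : Fin m → ℝ}

lemma muExt_pos (hmu : ∀ j, 0 < mu j) (k : Fin (m+1)) : 0 < muExt mu k :=
  Fin.cases (by simp [muExt]) (fun j => by simpa [muExt] using hmu j) k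

lemma coeff_Hpoly (mu : Fin m → ℝ) (α : Fin n →₀ ℕ) :
    (Hpoly gext A mu).coeff α = -∑ k, muExt mu k * (hpoly gext A k).coeff α := by
  simp [Hpoly, coeff_sum, coeff_C_mul]

lemma eval_zero_Hpoly (mu : Fin m → ℝ) :
    eval 0 (Hpoly gext A mu) =
      -eval 0 (hpoly gext A 0) - ∑ j : Fin m, mu j * eval 0 (hpoly gext A j.succ) := by
  simp only [eval_zero, Hpoly, muExt, Fin.sum_univ_succ, Fin.cons_zero, C_1, one_mul, Fin.cons_succ,
    neg_add_rev, map_add, map_neg, map_sum, map_mul, constantCoeff_C]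
  ring

lemma Hplus_sub_Hminus (mu : Fin m → ℝ) (α : Fin n →₀ ℕ) :
    Hplus gext A mu α - Hminus gext A mu α = (Hpoly gext A mu).coeff α := by
  rw [coeff_Hpoly, Hplus, Hminus, ← sum_sub_distrib, ← sum_neg_distrib]
  refine sum_congr rfl fun k _ => ?_
  rcases lt_trichotomy ((hpoly gext A k).coeff α) 0 with h | h | h
  · rw [if_pos h, if_neg (lt_asymm h)]; ring
  · simp [h]
  · rw [if_neg (lt_asymm h), if_pos h]; ring

lemma abs_coeff_Hpoly_le (hmu : ∀ j, 0 < mu j) (α : Fin n →₀ ℕ) :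
    |(Hpoly gext A mu).coeff α| ≤ max (Hplus gext A mu α) (Hminus gext A mu α) := by
  have hplus : 0 ≤ Hplus gext A mu α := sum_nonneg fun k _ => by
    split_ifs with h
    · exact neg_nonneg.2 (mul_nonpos_of_nonpos_of_nonneg h.le (muExt_pos hmu k).le)
    · exact le_rfl
  have hminus : 0 ≤ Hminus gext A mu α := sum_nonneg fun k _ => by
    split_ifs with h
    · exact mul_nonneg h.le (muExt_pos hmu k).le
    · exact le_rfl
  rw [← Hplus_sub_Hminus, abs_le]
  constructor <;> linarith [le_max_left (Hplus gext A mu α) (Hminus gext A mu α),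
    le_max_right (Hplus gext A mu α) (Hminus gext A mu α)]

lemma DelSet_Hpoly_subset (hO : ∀ j, OmegaSet d (-(gext j)) = DelSet d (-(gext j)))
    (mu : Fin m → ℝ) : DelSet d (Hpoly gext A mu) ⊆ DelTot2 d gext := by
  intro α hα
  obtain ⟨hne, hrest⟩ := mem_OmegaSet.1 (mem_pfilter.1 hα).1
  obtain ⟨k, hk⟩ : ∃ k, (gext k).coeff α ≠ 0 := by
    by_contra! h
    exact hne (by simp [coeff_Hpoly, hpoly, coeff_sum, h])
  exact mem_biUnion.2 ⟨k, mem_univ k, hO k ▸ mem_OmegaSet.2 ⟨by simpa using hk, hrest⟩⟩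

lemma coe_sub_lw2Obj_le_lwGp (hd : d ≠ 0) (hde : Even d)
    (hO : ∀ j, OmegaSet d (-(gext j)) = DelSet d (-(gext j)))
    {z : (Fin n →₀ ℕ) → Fin n → ℝ} {w : (Fin n →₀ ℕ) → ℝ}
    (hfeas : Lw2Feas d gext A z w mu) :
    ((-eval 0 (hpoly gext A 0) - lw2Obj d gext A z w mu : ℝ) : EReal) ≤
      lwGp d (Hpoly gext A mu) := by
  obtain ⟨hmu, hz, -, hsum, hprod, hwmax, -⟩ := hfeas
  have hρ := lwRho_le_sum_gpTerm hd hde (DelSet_Hpoly_subset gext A hO mu) hz hsum hprod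
    fun α hα => (abs_coeff_Hpoly_le gext A hmu α).trans (hwmax α hα)
  have hconst : ∑ j : Fin m, mu j * eval 0 (hpoly gext A j.succ) ≤
      ∑ j : Fin m, mu j * max (eval 0 (hpoly gext A j.succ)) 0 :=
    sum_le_sum fun j _ => mul_le_mul_of_nonneg_left (le_max_left _ _) (hmu j).le
  set t := ∑ α ∈ pfilter (DelTot2 d gext) (fun α => adeg α < d), gpTerm d α (w α) (z α)
  have hobj : lw2Obj d gext A z w mu =
      ∑ j : Fin m, mu j * max (eval 0 (hpoly gext A j.succ)) 0 + t := rfl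
  calc ((-eval 0 (hpoly gext A 0) - lw2Obj d gext A z w mu : ℝ) : EReal)
      ≤ ((eval 0 (Hpoly gext A mu) - t : ℝ) : EReal) := by
        rw [EReal.coe_le_coe_iff, eval_zero_Hpoly, hobj]
        linarith
    _ = ((eval 0 (Hpoly gext A mu) : ℝ) : EReal) - (t : EReal) := EReal.coe_sub _ _
    _ ≤ lwGp d (Hpoly gext A mu) := EReal.sub_le_sub le_rfl hρ

lemma fAgp_le_sSup_lwGp_Hpoly (hd : d ≠ 0) (hde : Even d)
    (hO : ∀ j, OmegaSet d (-(gext j)) = DelSet d (-(gext j))) :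
    fAgp d gext A ≤ sSup ((fun mu => lwGp d (Hpoly gext A mu)) '' {mu | ∀ j, 0 < mu j}) :=
  EReal.coe_sub_sInf_image_le fun t ht =>
    (coe_sub_lw2Obj_le_lwGp gext A hd hde hO ht).trans (le_sSup ⟨t.2.2, ht.1, rfl⟩)

end Lw2

lemma hpoly_id {n m : ℕ} (gext : Fin (m+1) → MvPolynomial (Fin n) ℝ) (k : Fin (m+1)) :
    hpoly gext (fun j k => if j = k then 1 else 0) k = gext k := by
  simp [hpoly]

lemma Hpoly_id_cons {n m : ℕ} (f : MvPolynomial (Fin n) ℝ)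
    (g : Fin m → MvPolynomial (Fin n) ℝ)
    (mu : Fin m → ℝ) :
    Hpoly (Fin.cons (-f) g) (fun j k => if j = k then 1 else 0) mu = polyG f g mu := by
  simp only [Hpoly, muExt, hpoly_id, Fin.sum_univ_succ, Fin.cons_zero, C_1, mul_neg, one_mul,
    Fin.cons_succ, neg_add_rev, neg_neg, polyG]
  ring

theorem stmt12_general {n m : ℕ} (d : ℕ)
    (f : MvPolynomial (Fin n) ℝ) (g : Fin m → MvPolynomial (Fin n) ℝ)
    (hd2 : 2 ≤ d) (hde : Even d)
    (gext : Fin (m+1) → MvPolynomial (Fin n) ℝ) (hgext : gext = Fin.cons (-f) g)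
    (hO : ∀ j, OmegaSet d (-(gext j)) = DelSet d (-(gext j)))
    (A : Fin (m+1) → Fin (m+1) → ℝ) (hA : A = fun j k => if j = k then 1 else 0) :
    fAgp d gext A ≤
      sSup ((fun lam => lwGp d (polyG f g lam)) '' {lam : Fin m → ℝ | ∀ j, 0 < lam j}) := by
  subst hgext hA
  simpa only [Hpoly_id_cons] using
    fAgp_le_sSup_lwGp_Hpoly _ (fun j k => if j = k then 1 else 0) (by omega) hde hO

/-- Theorem (A = I, part 2): under (†), `f^I_{gp,g} ≤ s₀(f,g) = sup{G(λ)_gp : λ ∈ (0,∞)^m}`. -/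
theorem stmt12 {n m : ℕ} (hn : 1 ≤ n) (d : ℕ)
    (f : MvPolynomial (Fin n) ℝ) (g : Fin m → MvPolynomial (Fin n) ℝ)
    (hd2 : 2 ≤ d) (hde : Even d) (hdf : f.totalDegree ≤ d)
    (hdg : ∀ j, (g j).totalDegree ≤ d)
    (hdLeast : ∀ d' : ℕ, Even d' → 2 ≤ d' → f.totalDegree ≤ d' →
      (∀ j, (g j).totalDegree ≤ d') → d ≤ d')
    (gext : Fin (m+1) → MvPolynomial (Fin n) ℝ) (hgext : gext = Fin.cons (-f) g)
    (hO : ∀ j, OmegaSet d (-(gext j)) = DelSet d (-(gext j)))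
    (hdagger : ∀ i : Fin n, ∃! k : Fin (m+1),
      (gext k).coeff (Finsupp.single i d) < 0)
    (A : Fin (m+1) → Fin (m+1) → ℝ) (hA : A = fun j k => if j = k then 1 else 0) :
    fAgp d gext A ≤
      sSup ((fun lam => lwGp d (polyG f g lam)) '' {lam : Fin m → ℝ | ∀ j, 0 < lam j}) :=
  stmt12_general d f g hd2 hde gext hgext hO A hA
end
end

section
/- With g := (N₁^d − x₁^d, …, Nₙ^d − xₙ^d) (so m = n and K_g = ∏_{i=1}^n [−N_i, N_i]), if f_{d,i} ≤ 0 for all i = 1,…,n (in particular, whenever deg f < d), then s(f,g) = f_tr,N. -/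
open MvPolynomial Finset

noncomputable section

/-- The trivial bound `f_tr,N := f(0) − ∑_{α ∈ Δ'(f)} |f_α| N^α`. -/
def ftr {n : ℕ} (N : Fin n → ℝ) (f : MvPolynomial (Fin n) ℝ) : ℝ :=
  eval (0 : Fin n → ℝ) f -
    ∑ α ∈ pfilter f.support (fun α => α ≠ 0 ∧
        ¬ IsSquare ((monomial α (f.coeff α)) : MvPolynomial (Fin n) ℝ)),
      |f.coeff α| * ∏ i, N i ^ (α i)

/-!
Fix `λ` and a feasible point `z` of (lw) for `G(λ)`. For `α ∈ Δ(f)`, weighted AM-GM applied to the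
numbers `z_{α,i} Nᵢ^d / αᵢ` (weights `αᵢ`) and to the `α`-th term of the objective (weight `d − |α|`)
gives `|f_α| N^α ≤ ∑ᵢ z_{α,i} Nᵢ^d + (α-th term of v(z))`. Summing over `α` and using
`∑_α z_{α,i} ≤ G(λ)_{d,i}` bounds `G(λ)_gp` by `G(λ)(0) + ∑ᵢ G(λ)_{d,i} Nᵢ^d − ∑_{α ∈ Δ(f)} |f_α| N^α`,
which does not depend on `λ` and equals `f_tr,N`, since the terms `f_{d,i} xᵢ^d` with `f_{d,i} < 0`
are exactly the non-square pure powers. All AM-GM steps are equalities at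
`z_{α,i} = |f_α| N^α αᵢ / (d Nᵢ^d)`, and `λ` can be chosen to make the remaining constraints tight.
-/

theorem Real.natCast_sum_mul_le_of_pow_sum_eq_prod {ι : Type*} (s : Finset ι) (w : ι → ℕ)
    {y : ι → ℝ} (hy : ∀ i ∈ s, 0 ≤ y i) {G : ℝ} (hG : 0 ≤ G)
    (hGy : G ^ (∑ i ∈ s, w i) = ∏ i ∈ s, y i ^ w i) :
    (∑ i ∈ s, w i : ℕ) * G ≤ ∑ i ∈ s, (w i : ℝ) * y i := by
  rcases Nat.eq_zero_or_pos (∑ i ∈ s, w i) with hw | hw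
  · rw [hw, Nat.cast_zero, zero_mul]
    exact sum_nonneg fun i hi => mul_nonneg (Nat.cast_nonneg _) (hy i hi)
  have hwR : (0 : ℝ) < ∑ i ∈ s, (w i : ℝ) := by exact_mod_cast hw
  have amgm := Real.geom_mean_le_arith_mean s (fun i => (w i : ℝ)) y
    (fun i _ => Nat.cast_nonneg _) hwR hy
  simp only [Real.rpow_natCast, ← hGy, ← Nat.cast_sum] at amgm
  rw [Real.pow_rpow_inv_natCast hG hw.ne', le_div_iff₀ (by exact_mod_cast hw)] at amgm
  linarith

section LwProgram

variable {n d : ℕ}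

theorem abs_mul_prod_pow_le_of_pow_mul_prod_eq (hde : Even d) (hd0 : d ≠ 0) {α : Fin n →₀ ℕ}
    (hα : adeg α ≤ d) {N : Fin n → ℝ} (hN : ∀ i, 0 ≤ N i) {z : Fin n → ℝ} (hz : ∀ i, 0 ≤ z i)
    (hz0 : ∀ i, α i = 0 → z i = 0) {c t : ℝ} (ht : 0 ≤ t)
    (hct : t ^ (d - adeg α) * ∏ i, (z i / α i) ^ α i = (c / d) ^ d) :
    |c| * ∏ i, N i ^ α i ≤ ∑ i, z i * N i ^ d + ((d : ℝ) - adeg α) * t := by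
  have hdR : (0 : ℝ) < d := by positivity
  have hNα : 0 ≤ ∏ i, N i ^ α i := prod_nonneg fun i _ => pow_nonneg (hN i) _
  set y : Option (Fin n) → ℝ := fun o => o.elim t fun i => z i / α i * N i ^ d
  set w : Option (Fin n) → ℕ := fun o => o.elim (d - adeg α) fun i => α i
  have hw : ∑ o, w o = d := by
    rw [Fintype.sum_option]
    simp only [w, Option.elim]
    rw [adeg] at hα ⊢
    omega
  have hy : ∀ o ∈ univ, 0 ≤ y o := by
    rintro (_ | i) -
    exacts [ht, by have := hz i; have := hN i; simp only [y, Option.elim]; positivity]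
  have hGy : (|c| * (∏ i, N i ^ α i) / d) ^ ∑ o, w o = ∏ o, y o ^ w o := by
    calc (|c| * (∏ i, N i ^ α i) / d) ^ ∑ o, w o = (c / d) ^ d * ∏ i, (N i ^ d) ^ α i := by
          rw [hw, mul_div_right_comm, mul_pow, div_pow |c|, hde.pow_abs, ← div_pow, ← prod_pow]
          simp only [← pow_mul, mul_comm]
      _ = ∏ o, y o ^ w o := by
          rw [← hct, Fintype.prod_option]
          simp only [y, w, Option.elim, mul_pow, prod_mul_distrib]
          ring
  have amgm := Real.natCast_sum_mul_le_of_pow_sum_eq_prod univ w hy (by positivity) hGy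
  rw [hw, mul_div_cancel₀ _ hdR.ne', Fintype.sum_option] at amgm
  convert amgm using 1
  simp only [y, w, Option.elim, Nat.cast_sub hα]
  rw [add_comm]
  congr 1
  refine sum_congr rfl fun i _ => ?_
  rcases eq_or_ne (α i) 0 with h | h
  · simp [h, hz0 i h]
  · field_simp

theorem mem_DelSet {p : MvPolynomial (Fin n) ℝ} {α : Fin n →₀ ℕ} :
    α ∈ DelSet d p ↔ p.coeff α ≠ 0 ∧ adeg α ≤ d ∧ α ≠ 0 ∧ (∀ i, α ≠ Finsupp.single i d) ∧
      ¬ IsSquare ((monomial α (p.coeff α)) : MvPolynomial (Fin n) ℝ) := by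
  simp [DelSet, OmegaSet, pfilter, and_assoc]

theorem DelSet_congr {p q : MvPolynomial (Fin n) ℝ}
    (h : ∀ α, α ≠ 0 → (∀ i, α ≠ Finsupp.single i d) → p.coeff α = q.coeff α) :
    DelSet d p = DelSet d q := by
  ext α
  simp only [mem_DelSet]
  constructor <;> rintro ⟨hc, hα, h0, hs, hsq⟩ <;>
    [rw [h α h0 hs] at hc hsq; rw [← h α h0 hs] at hc hsq] <;> exact ⟨hc, hα, h0, hs, hsq⟩

theorem lwObj_eq_sum (p : MvPolynomial (Fin n) ℝ) (z : (Fin n →₀ ℕ) → Fin n → ℝ) :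
    lwObj d p z = ∑ α ∈ DelSet d p, ((d : ℝ) - adeg α) *
      (((p.coeff α / d) ^ d * ∏ i, ((α i : ℝ) / z α i) ^ α i) ^ (1 / ((d : ℝ) - adeg α))) := by
  refine @sum_filter_of_ne _ _ _ _ _ _ (fun _ => Classical.propDecidable _) fun α hα hne => ?_
  refine lt_of_le_of_ne (mem_DelSet.1 hα).2.1 fun h => ?_
  simp [h] at hne

/-- The largest value of `|p_α x^α|` on the box `∏ [-Nᵢ, Nᵢ]`. -/
def boxWeight (N : Fin n → ℝ) (p : MvPolynomial (Fin n) ℝ) (α : Fin n →₀ ℕ) : ℝ :=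
  |p.coeff α| * ∏ i, N i ^ α i

theorem sum_boxWeight_le (hde : Even d) (hd0 : d ≠ 0) {N : Fin n → ℝ} (hN : ∀ i, 0 ≤ N i)
    {p : MvPolynomial (Fin n) ℝ} {z : (Fin n →₀ ℕ) → Fin n → ℝ} (hz : LwFeas d p z) :
    ∑ α ∈ DelSet d p, boxWeight N p α ≤
      ∑ i, p.coeff (Finsupp.single i d) * N i ^ d + lwObj d p z := by
  obtain ⟨hzα, hzsum, hzdeg⟩ := hz
  have key : ∀ α ∈ DelSet d p, boxWeight N p α ≤ ∑ i, z α i * N i ^ d + ((d : ℝ) - adeg α) *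
      (((p.coeff α / d) ^ d * ∏ i, ((α i : ℝ) / z α i) ^ α i) ^ (1 / ((d : ℝ) - adeg α))) := by
    intro α hα
    have hαd := (mem_DelSet.1 hα).2.1
    set B := (p.coeff α / d) ^ d * ∏ i, ((α i : ℝ) / z α i) ^ α i
    have hB : 0 ≤ B := mul_nonneg (hde.pow_nonneg _)
      (prod_nonneg fun i _ => pow_nonneg (div_nonneg (Nat.cast_nonneg _) (hzα α hα i).1) _)
    have hcancel : (∏ i, ((α i : ℝ) / z α i) ^ α i) * ∏ i, (z α i / α i) ^ α i = 1 := by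
      rw [← prod_mul_distrib]
      refine prod_eq_one fun i _ => ?_
      rcases eq_or_ne (α i) 0 with h | h
      · simp [h]
      · have hz : z α i ≠ 0 := fun h' => h ((hzα α hα i).2.1 h')
        have hαi : (α i : ℝ) ≠ 0 := Nat.cast_ne_zero.2 h
        rw [← mul_pow, div_mul_div_comm, mul_comm (α i : ℝ), div_self (mul_ne_zero hz hαi), one_pow]
    refine abs_mul_prod_pow_le_of_pow_mul_prod_eq hde hd0 hαd hN (fun i => (hzα α hα i).1)
      (fun i => (hzα α hα i).2.2) (Real.rpow_nonneg hB _) ?_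
    rcases hαd.lt_or_eq with hlt | heq
    · rw [← Nat.cast_sub hαd, one_div,
        Real.rpow_inv_natCast_pow hB (Nat.sub_ne_zero_of_lt hlt), mul_assoc, hcancel, mul_one]
    · rw [heq, Nat.sub_self, pow_zero, one_mul, hzdeg α hα heq]
  calc ∑ α ∈ DelSet d p, boxWeight N p α
      ≤ ∑ α ∈ DelSet d p, ∑ i, z α i * N i ^ d + lwObj d p z := by
        rw [lwObj_eq_sum, ← sum_add_distrib]
        exact sum_le_sum key
    _ ≤ ∑ i, p.coeff (Finsupp.single i d) * N i ^ d + lwObj d p z := by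
        rw [sum_comm]
        gcongr with i
        rw [← sum_mul]
        exact mul_le_mul_of_nonneg_right (hzsum i) (pow_nonneg (hN i) d)

theorem boxWeight_pos {N : Fin n → ℝ} (hN : ∀ i, 0 < N i) {p : MvPolynomial (Fin n) ℝ}
    {α : Fin n →₀ ℕ} (hα : p.coeff α ≠ 0) : 0 < boxWeight N p α :=
  mul_pos (abs_pos.2 hα) (prod_pos fun i _ => pow_pos (hN i) _)

theorem boxWeight_nonneg {N : Fin n → ℝ} (hN : ∀ i, 0 ≤ N i) (p : MvPolynomial (Fin n) ℝ)
    (α : Fin n →₀ ℕ) : 0 ≤ boxWeight N p α :=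
  mul_nonneg (abs_nonneg _) (prod_nonneg fun i _ => pow_nonneg (hN i) _)

theorem boxWeight_div_pow (hde : Even d) (N : Fin n → ℝ) (p : MvPolynomial (Fin n) ℝ)
    (α : Fin n →₀ ℕ) :
    (boxWeight N p α / d) ^ d = (p.coeff α / d) ^ d * (∏ i, N i ^ α i) ^ d := by
  rw [boxWeight, mul_div_right_comm, mul_pow, div_pow |_|, hde.pow_abs, ← div_pow]

/-- A minimizer of program (lw) when its constraints `∑_α z_{α,i} ≤ p_{d,i}` hold with equality:
it makes every AM-GM step of `sum_boxWeight_le` an equality. -/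
def lwWitness (N : Fin n → ℝ) (d : ℕ) (p : MvPolynomial (Fin n) ℝ) (α : Fin n →₀ ℕ)
    (i : Fin n) : ℝ :=
  boxWeight N p α * α i / (d * N i ^ d)

theorem lwWitness_nonneg {N : Fin n → ℝ} (hN : ∀ i, 0 ≤ N i) (p : MvPolynomial (Fin n) ℝ)
    (α : Fin n →₀ ℕ) (i : Fin n) : 0 ≤ lwWitness N d p α i := by
  have := hN i
  have := boxWeight_nonneg hN p α
  unfold lwWitness
  positivity

theorem prod_lwWitness_div_pow (N : Fin n → ℝ) (p : MvPolynomial (Fin n) ℝ) (α : Fin n →₀ ℕ) :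
    ∏ i, (lwWitness N d p α i / α i) ^ α i =
      (boxWeight N p α / d) ^ adeg α / (∏ i, N i ^ α i) ^ d := by
  have h : ∀ i, (lwWitness N d p α i / α i) ^ α i = (boxWeight N p α / d / N i ^ d) ^ α i := by
    intro i
    rcases eq_or_ne (α i) 0 with h | h
    · simp [h]
    · rw [lwWitness, mul_div_right_comm, mul_div_cancel_right₀ _ (Nat.cast_ne_zero.2 h),
        div_div]
  simp only [h, div_pow, prod_div_distrib, prod_pow_eq_pow_sum, ← prod_pow, ← pow_mul,
    mul_comm d]
  rfl

theorem lwFeas_lwWitness (hde : Even d) (hd0 : d ≠ 0) {N : Fin n → ℝ} (hN : ∀ i, 0 < N i)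
    {p : MvPolynomial (Fin n) ℝ}
    (hp : ∀ i, p.coeff (Finsupp.single i d) = ∑ α ∈ DelSet d p, lwWitness N d p α i) :
    LwFeas d p (lwWitness N d p) := by
  refine ⟨fun α hα i => ?_, fun i => (hp i).ge, fun α hα hαd => ?_⟩
  · have hA := boxWeight_pos hN (mem_DelSet.1 hα).1
    have hdN : (0 : ℝ) < d * N i ^ d := by have := hN i; positivity
    refine ⟨lwWitness_nonneg (fun i => (hN i).le) p α i, ?_⟩
    simp [lwWitness, hA.ne', hdN.ne']
  · rw [prod_lwWitness_div_pow, hαd, boxWeight_div_pow hde,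
      mul_div_cancel_right₀ _ (pow_ne_zero _ (prod_pos fun i _ => pow_pos (hN i) _).ne')]

theorem lwObj_lwWitness (hde : Even d) {N : Fin n → ℝ} (hN : ∀ i, 0 < N i)
    (p : MvPolynomial (Fin n) ℝ) :
    lwObj d p (lwWitness N d p) = ∑ α ∈ DelSet d p, ((d : ℝ) - adeg α) * (boxWeight N p α / d) := by
  rw [lwObj_eq_sum]
  refine sum_congr rfl fun α hα => ?_
  obtain ⟨hc, hαd, -⟩ := mem_DelSet.1 hα
  rcases hαd.lt_or_eq with hlt | heq
  · have hA : 0 < boxWeight N p α / d := div_pos (boxWeight_pos hN hc) (by norm_cast; omega)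
    have hN' : (∏ i, N i ^ α i) ^ d ≠ 0 := pow_ne_zero _ (prod_pos fun i _ => pow_pos (hN i) _).ne'
    have hB : (p.coeff α / d) ^ d * ∏ i, ((α i : ℝ) / lwWitness N d p α i) ^ α i =
        (boxWeight N p α / d) ^ (d - adeg α) := by
      have hinv : ∏ i, ((α i : ℝ) / lwWitness N d p α i) ^ α i =
          (∏ i, (lwWitness N d p α i / α i) ^ α i)⁻¹ := by
        rw [← prod_inv_distrib]
        simp only [← inv_pow, inv_div]
      rw [hinv, prod_lwWitness_div_pow, inv_div, pow_sub₀ _ hA.ne' hαd, boxWeight_div_pow hde]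
      field_simp
    rw [hB, ← Nat.cast_sub hαd, one_div, Real.pow_rpow_inv_natCast hA.le (by omega)]
  · simp [heq]

theorem sum_sum_lwWitness_mul_pow (hd0 : d ≠ 0) {N : Fin n → ℝ} (hN : ∀ i, 0 < N i)
    (p : MvPolynomial (Fin n) ℝ) :
    ∑ i, (∑ α ∈ DelSet d p, lwWitness N d p α i) * N i ^ d =
      ∑ α ∈ DelSet d p, (adeg α : ℝ) * (boxWeight N p α / d) := by
  simp only [sum_mul]
  rw [sum_comm]
  refine sum_congr rfl fun α _ => ?_
  rw [adeg, Nat.cast_sum, sum_mul]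
  refine sum_congr rfl fun i _ => ?_
  have := (hN i).ne'
  unfold lwWitness
  field_simp

/-- The value of `p_gp` when `lwWitness` makes the constraints `∑_α z_{α,i} ≤ p_{d,i}` of (lw)
tight, and an upper bound for it in general. -/
def lwBoxBound (N : Fin n → ℝ) (d : ℕ) (p : MvPolynomial (Fin n) ℝ) : ℝ :=
  eval 0 p + ∑ i, p.coeff (Finsupp.single i d) * N i ^ d - ∑ α ∈ DelSet d p, boxWeight N p α

theorem le_lwRho (hde : Even d) (hd0 : d ≠ 0) {N : Fin n → ℝ} (hN : ∀ i, 0 ≤ N i)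
    (p : MvPolynomial (Fin n) ℝ) :
    ((∑ α ∈ DelSet d p, boxWeight N p α - ∑ i, p.coeff (Finsupp.single i d) * N i ^ d : ℝ) :
      EReal) ≤ lwRho d p := by
  refine le_sInf ?_
  rintro _ ⟨z, hz, rfl⟩
  have := sum_boxWeight_le hde hd0 hN hz
  exact EReal.coe_le_coe_iff.2 (by linarith)

theorem lwRho_eq_of_coeff_eq_sum_lwWitness (hde : Even d) (hd0 : d ≠ 0) {N : Fin n → ℝ}
    (hN : ∀ i, 0 < N i) {p : MvPolynomial (Fin n) ℝ}
    (hp : ∀ i, p.coeff (Finsupp.single i d) = ∑ α ∈ DelSet d p, lwWitness N d p α i) :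
    lwRho d p =
      ((∑ α ∈ DelSet d p, boxWeight N p α - ∑ i, p.coeff (Finsupp.single i d) * N i ^ d : ℝ) :
        EReal) := by
  refine le_antisymm ?_ (le_lwRho hde hd0 (fun i => (hN i).le) p)
  have hobj : lwObj d p (lwWitness N d p) =
      ∑ α ∈ DelSet d p, boxWeight N p α - ∑ i, p.coeff (Finsupp.single i d) * N i ^ d := by
    simp only [hp, sum_sum_lwWitness_mul_pow hd0 hN, lwObj_lwWitness hde hN, ← sum_sub_distrib]
    refine sum_congr rfl fun α _ => ?_
    field_simp
  rw [← hobj]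
  exact sInf_le ⟨_, lwFeas_lwWitness hde hd0 hN hp, rfl⟩

theorem lwGp_le_lwBoxBound (hde : Even d) (hd0 : d ≠ 0) {N : Fin n → ℝ} (hN : ∀ i, 0 ≤ N i)
    (p : MvPolynomial (Fin n) ℝ) : lwGp d p ≤ lwBoxBound N d p := by
  rw [lwBoxBound, ← sub_sub_eq_add_sub, EReal.coe_sub]
  exact EReal.sub_le_sub le_rfl (le_lwRho hde hd0 hN p)

theorem lwGp_eq_lwBoxBound (hde : Even d) (hd0 : d ≠ 0) {N : Fin n → ℝ} (hN : ∀ i, 0 < N i)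
    {p : MvPolynomial (Fin n) ℝ}
    (hp : ∀ i, p.coeff (Finsupp.single i d) = ∑ α ∈ DelSet d p, lwWitness N d p α i) :
    lwGp d p = lwBoxBound N d p := by
  rw [lwGp, lwRho_eq_of_coeff_eq_sum_lwWitness hde hd0 hN hp, ← EReal.coe_sub, lwBoxBound,
    sub_sub_eq_add_sub]

end LwProgram

theorem MvPolynomial.not_isSquare_monomial_of_neg {σ : Type*} (α : σ →₀ ℕ) {c : ℝ} (hc : c < 0) :
    ¬ IsSquare (monomial α c) := by
  rintro ⟨q, hq⟩
  have h := congrArg (eval fun _ => (1 : ℝ)) hq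
  simp only [eval_monomial, one_pow, Finsupp.prod, prod_const_one, mul_one, map_mul] at h
  nlinarith [mul_self_nonneg (eval (fun _ => (1 : ℝ)) q)]

theorem adeg_le_of_mem_support {n d : ℕ} {f : MvPolynomial (Fin n) ℝ} (hdf : f.totalDegree ≤ d)
    {α : Fin n →₀ ℕ} (hα : α ∈ f.support) : adeg α ≤ d := by
  rw [adeg, ← Finsupp.sum_fintype α (fun _ e => e) fun _ => rfl]
  exact (le_totalDegree hα).trans hdf

section BoxConstraints

variable {n d : ℕ} (N : Fin n → ℝ) (f : MvPolynomial (Fin n) ℝ) (lam : Fin n → ℝ)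

def boxConstraints (d : ℕ) : Fin n → MvPolynomial (Fin n) ℝ :=
  fun i => C (N i ^ d) - X i ^ d

theorem polyG_boxConstraints :
    polyG f (boxConstraints N d) lam =
      f - C (∑ i, lam i * N i ^ d) + ∑ i, C (lam i) * X i ^ d := by
  simp only [polyG, boxConstraints, mul_sub, sum_sub_distrib, ← C_mul, map_sum]
  ring

theorem coeff_polyG_boxConstraints_of_ne {α : Fin n →₀ ℕ} (h0 : α ≠ 0)
    (hs : ∀ i, α ≠ Finsupp.single i d) :
    (polyG f (boxConstraints N d) lam).coeff α = f.coeff α := by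
  simp only [polyG_boxConstraints, coeff_add, coeff_sub, coeff_C, coeff_sum, coeff_C_mul,
    coeff_X_pow]
  simp [Ne.symm h0, fun i => Ne.symm (hs i)]

theorem coeff_polyG_boxConstraints_single (hd0 : d ≠ 0) (i : Fin n) :
    (polyG f (boxConstraints N d) lam).coeff (Finsupp.single i d) =
      f.coeff (Finsupp.single i d) + lam i := by
  simp only [polyG_boxConstraints, coeff_add, coeff_sub, coeff_C, coeff_sum, coeff_C_mul,
    coeff_X_pow]
  simp [Finsupp.single_left_inj hd0, eq_comm (a := (0 : Fin n →₀ ℕ)), hd0]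

theorem eval_zero_polyG_boxConstraints (hd0 : d ≠ 0) :
    eval 0 (polyG f (boxConstraints N d) lam) = eval 0 f - ∑ i, lam i * N i ^ d := by
  simp [polyG_boxConstraints, hd0]

theorem DelSet_polyG_boxConstraints :
    DelSet d (polyG f (boxConstraints N d) lam) = DelSet d f :=
  DelSet_congr fun _ h0 hs => coeff_polyG_boxConstraints_of_ne N f lam h0 hs

theorem boxWeight_polyG_boxConstraints {α : Fin n →₀ ℕ} (hα : α ∈ DelSet d f) :
    boxWeight N (polyG f (boxConstraints N d) lam) α = boxWeight N f α := by
  obtain ⟨-, -, h0, hs, -⟩ := mem_DelSet.1 hα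
  rw [boxWeight, boxWeight, coeff_polyG_boxConstraints_of_ne N f lam h0 hs]

theorem lwWitness_polyG_boxConstraints {α : Fin n →₀ ℕ} (i : Fin n) (hα : α ∈ DelSet d f) :
    lwWitness N d (polyG f (boxConstraints N d) lam) α i = lwWitness N d f α i := by
  rw [lwWitness, lwWitness, boxWeight_polyG_boxConstraints N f lam hα]

theorem lwBoxBound_polyG_boxConstraints (hd0 : d ≠ 0) :
    lwBoxBound N d (polyG f (boxConstraints N d) lam) = lwBoxBound N d f := by
  rw [lwBoxBound, lwBoxBound, DelSet_polyG_boxConstraints, eval_zero_polyG_boxConstraints N f lam hd0,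
    sum_congr rfl fun α => boxWeight_polyG_boxConstraints N f lam]
  simp only [coeff_polyG_boxConstraints_single N f lam hd0, add_mul, sum_add_distrib]
  ring

end BoxConstraints

theorem prod_pow_single {n : ℕ} (N : Fin n → ℝ) (i : Fin n) (d : ℕ) :
    ∏ j, N j ^ (Finsupp.single i d) j = N i ^ d := by
  simp [Finsupp.single_apply, pow_ite]

theorem ftr_eq_lwBoxBound {n d : ℕ} (hd0 : d ≠ 0) {f : MvPolynomial (Fin n) ℝ}
    (hdf : f.totalDegree ≤ d) (hfd : ∀ i, f.coeff (Finsupp.single i d) ≤ 0) (N : Fin n → ℝ) :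
    ftr N f = lwBoxBound N d f := by
  classical
  set T := pfilter f.support fun α =>
    α ≠ 0 ∧ ¬ IsSquare ((monomial α (f.coeff α)) : MvPolynomial (Fin n) ℝ)
  have hT : ∀ α, α ∈ T ↔ f.coeff α ≠ 0 ∧ α ≠ 0 ∧
      ¬ IsSquare ((monomial α (f.coeff α)) : MvPolynomial (Fin n) ℝ) := by
    simp [T, pfilter]
  have hDel : T.filter (fun α => ∀ i, α ≠ Finsupp.single i d) = DelSet d f := by
    ext α
    simp only [mem_filter, hT, mem_DelSet]
    constructor
    · rintro ⟨⟨hc, h0, hsq⟩, hs⟩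
      exact ⟨hc, adeg_le_of_mem_support hdf (mem_support_iff.2 hc), h0, hs, hsq⟩
    · rintro ⟨hc, -, h0, hs, hsq⟩
      exact ⟨⟨hc, h0, hsq⟩, hs⟩
  have hsingle : T.filter (fun α => ¬ ∀ i, α ≠ Finsupp.single i d) =
      (univ.filter fun i => f.coeff (Finsupp.single i d) ≠ 0).image (Finsupp.single · d) := by
    ext α
    simp only [mem_filter, mem_image, hT, mem_univ, true_and, not_forall, not_not]
    constructor
    · rintro ⟨⟨hc, -, -⟩, i, rfl⟩
      exact ⟨i, hc, rfl⟩
    · rintro ⟨i, hc, rfl⟩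
      exact ⟨⟨hc, by simpa using hd0, not_isSquare_monomial_of_neg _ ((hfd i).lt_of_ne hc)⟩, i, rfl⟩
  have hsum : ∑ i ∈ univ.filter (fun i => f.coeff (Finsupp.single i d) ≠ 0),
      boxWeight N f (Finsupp.single i d) = -∑ i, f.coeff (Finsupp.single i d) * N i ^ d := by
    rw [← sum_neg_distrib, sum_filter_of_ne fun i _ h => abs_ne_zero.1 (left_ne_zero_of_mul h)]
    refine sum_congr rfl fun i _ => ?_
    rw [boxWeight, prod_pow_single, abs_of_nonpos (hfd i), neg_mul]
  change eval 0 f - ∑ α ∈ T, boxWeight N f α = _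
  rw [lwBoxBound, ← sum_filter_add_sum_filter_not T fun α => ∀ i, α ≠ Finsupp.single i d, hDel,
    hsingle, sum_image fun i _ j _ h => (Finsupp.single_left_inj hd0).1 h, hsum]
  ring

theorem stmt16_general {n : ℕ} (d : ℕ) (hd2 : 2 ≤ d) (hde : Even d)
    (f : MvPolynomial (Fin n) ℝ) (hdf : f.totalDegree ≤ d)
    (hfd : ∀ i : Fin n, f.coeff (Finsupp.single i d) ≤ 0)
    (N : Fin n → ℝ) (hN : ∀ i, 0 < N i)
    (g : Fin n → MvPolynomial (Fin n) ℝ) (hg : ∀ i, g i = C (N i ^ d) - X i ^ d) :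
    sBound d f g = ((ftr N f : ℝ) : EReal) := by
  have hd0 : d ≠ 0 := by omega
  obtain rfl : g = boxConstraints N d := funext hg
  rw [ftr_eq_lwBoxBound hd0 hdf hfd N]
  refine le_antisymm (sSup_le ?_) (le_sSup ?_)
  · rintro _ ⟨lam, -, rfl⟩
    rw [← lwBoxBound_polyG_boxConstraints N f lam hd0]
    exact lwGp_le_lwBoxBound hde hd0 (fun i => (hN i).le) _
  · -- saturate the constraints `∑_α z_{α,i} ≤ G(λ)_{d,i}` at the optimal point of (lw)
    set lam : Fin n → ℝ := fun i =>
      ∑ α ∈ DelSet d f, lwWitness N d f α i - f.coeff (Finsupp.single i d)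
    refine ⟨lam, fun i => sub_nonneg.2 ?_, ?_⟩
    · exact (hfd i).trans (sum_nonneg fun α _ => lwWitness_nonneg (fun i => (hN i).le) f α i)
    · dsimp only
      rw [lwGp_eq_lwBoxBound hde hd0 hN, lwBoxBound_polyG_boxConstraints N f lam hd0]
      intro i
      rw [coeff_polyG_boxConstraints_single N f lam hd0, DelSet_polyG_boxConstraints,
        sum_congr rfl fun _ => lwWitness_polyG_boxConstraints N f lam i]
      exact add_sub_cancel _ _

/-- With `gᵢ := Nᵢ^d − xᵢ^d`, if `f_{d,i} ≤ 0` for all `i`, then `s(f,g) = f_tr,N`. -/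
theorem stmt16 {n : ℕ} (hn : 1 ≤ n) (d : ℕ) (hd2 : 2 ≤ d) (hde : Even d)
    (f : MvPolynomial (Fin n) ℝ) (hdf : f.totalDegree ≤ d)
    (hfd : ∀ i : Fin n, f.coeff (Finsupp.single i d) ≤ 0)
    (N : Fin n → ℝ) (hN : ∀ i, 0 < N i)
    (g : Fin n → MvPolynomial (Fin n) ℝ) (hg : ∀ i, g i = C (N i ^ d) - X i ^ d) :
    sBound d f g = ((ftr N f : ℝ) : EReal) :=
  stmt16_general d hd2 hde f hdf hfd N hN g hg
end
end
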